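/- Fix integers J and J₀ with 1 ≤ J₀ ≤ J − 2, and let 𝒵 = {z : Fin J | z = 0 ∨ J₀ ≤ z} with base point 0 ∈ 𝒵. Let p : Fin J → 𝒵 → ℝ satisfy p j z ≥ 0 for all j, z and ∑_{j ∈ Fin J} p j z = 1 for every z ∈ 𝒵. Suppose that for every σ : Fin J → 𝒵 such that σ j ≠ j (as elements of Fin J) whenever J₀ ≤ j, one has ∑_{j ∈ Fin J} p j (σ j) ≤ 1. Then there exists a probability mass function (PMF) q on 𝒵 → Fin J such that every d in the support of q has the base-state default property, and for all j ∈ Fin J and z ∈ 𝒵, q({d : 𝒵 → Fin J | d z = j}) = p j z. -/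
import Mathlib


/-- The instrument set `𝒵 = {z : Fin J | z = 0 ∨ J₀ ≤ z}`. -/
abbrev Zcal (J J₀ : ℕ) : Type := {z : Fin J // (z : ℕ) = 0 ∨ J₀ ≤ (z : ℕ)}

open MeasureTheory Set

noncomputable def stmtD {J J₀ : ℕ} (p : Fin J → Zcal J J₀ → ℝ) (m : Fin J) (u : ℝ) :
    Zcal J J₀ → Fin J :=
  fun z => if (z : ℕ) = 0 then m else if u < p m z then m else (z : Fin J)

lemma stmtD_measurable {J J₀ : ℕ} (p : Fin J → Zcal J J₀ → ℝ) (m : Fin J) :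
    Measurable (stmtD p m) := by
  apply measurable_pi_iff.2
  intro z
  by_cases h : (z : ℕ) = 0
  · simp only [stmtD, if_pos h]; exact measurable_const
  · simp only [stmtD, if_neg h]
    exact Measurable.ite (measurableSet_lt measurable_id measurable_const)
      measurable_const measurable_const

noncomputable def stmtMu {J J₀ : ℕ} (p : Fin J → Zcal J J₀ → ℝ) (m : Fin J) (c : ℝ) :
    Measure (Zcal J J₀ → Fin J) :=
  (volume.restrict (Ico (0:ℝ) c)).map (stmtD p m)

lemma stmtMu_apply {J J₀ : ℕ} (p : Fin J → Zcal J J₀ → ℝ) (m : Fin J) (c : ℝ)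
    (A : Set (Zcal J J₀ → Fin J)) :
    stmtMu p m c A = volume ((stmtD p m) ⁻¹' A ∩ Ico (0:ℝ) c) := by
  rw [stmtMu, Measure.map_apply (stmtD_measurable p m) (Set.toFinite A).measurableSet,
    Measure.restrict_apply (stmtD_measurable p m (Set.toFinite A).measurableSet)]

lemma meas_sum_ite {α : Type*} [Fintype α] [MeasurableSpace α] [MeasurableSingletonClass α]
    (μ : Measure α) (A : Set α) [DecidablePred (· ∈ A)] :
    ∑ d, (if d ∈ A then μ {d} else 0) = μ A := by
  rw [← Finset.sum_filter]
  rw [← measure_biUnion_finset ?_ (fun b _ => measurableSet_singleton b)]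
  · congr 1
    ext x
    simp
  · intro a ha b hb hab
    simp only [Set.disjoint_singleton]
    exact hab

/-- Theorem 2 of the paper (sharpness) in the case J₀ > 0. -/
theorem stmt_9 (J J₀ : ℕ) (hJ₀ : 1 ≤ J₀) (hJ : J₀ + 2 ≤ J)
    (p : Fin J → Zcal J J₀ → ℝ)
    (hpos : ∀ j z, 0 ≤ p j z) (hsum : ∀ z : Zcal J J₀, ∑ j : Fin J, p j z = 1)
    (hineq : ∀ σ : Fin J → Zcal J J₀, (∀ j : Fin J, J₀ ≤ (j : ℕ) → ((σ j : Fin J) ≠ j)) →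
      ∑ j : Fin J, p j (σ j) ≤ 1) :
    ∃ q : PMF (Zcal J J₀ → Fin J),
      (∀ d ∈ q.support, ∀ z : Zcal J J₀,
        d z = (z : Fin J) ∨ d z = d ⟨⟨0, by omega⟩, Or.inl rfl⟩) ∧
      (∀ (j : Fin J) (z : Zcal J J₀),
        q.toOuterMeasure {d : Zcal J J₀ → Fin J | d z = j} = ENNReal.ofReal (p j z)) := by
  classical
  set z0 : Zcal J J₀ := ⟨⟨0, by omega⟩, Or.inl rfl⟩ with hz0
  have hz0v : ((z0 : Fin J) : ℕ) = 0 := rfl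
  -- monotonicity: p j z ≤ p j z0 whenever z ≠ j
  have hmono : ∀ (j : Fin J) (z : Zcal J J₀), (z : Fin J) ≠ j → p j z ≤ p j z0 := by
    intro j z hne
    by_cases hz : (z : ℕ) = 0
    · have : z = z0 := Subtype.ext (Fin.ext hz)
      rw [this]
    · have key := hineq (fun k => if k = j then z else z0) ?_
      · have hsum' : ∑ k, p k (if k = j then z else z0) = 1 + (p j z - p j z0) := by
          have h1 : ∀ k : Fin J, p k (if k = j then z else z0)
              = p k z0 + (if k = j then p j z - p j z0 else 0) := by
            intro k
            by_cases hk : k = j <;> simp [hk]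
          simp only [h1]
          rw [Finset.sum_add_distrib, hsum z0, Finset.sum_ite_eq' Finset.univ j]
          simp
        rw [hsum'] at key
        linarith
      · intro k hk
        by_cases hkj : k = j
        · simpa [hkj] using hne
        · simp only [if_neg hkj]
          intro hcon
          have : ((z0 : Fin J) : ℕ) = (k : ℕ) := congrArg Fin.val hcon
          rw [hz0v] at this
          omega
  -- the mass function
  set f : (Zcal J J₀ → Fin J) → ENNReal := fun d => ∑ m, stmtMu p m (p m z0) {d} with hfdef
  have hμuniv : ∀ m : Fin J, stmtMu p m (p m z0) univ = ENNReal.ofReal (p m z0) := by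
    intro m
    rw [stmtMu_apply]
    simp [Real.volume_Ico]
  have hf : ∑ d, f d = 1 := by
    rw [hfdef]
    rw [Finset.sum_comm]
    have h1 : ∀ m : Fin J, ∑ d, stmtMu p m (p m z0) {d} = ENNReal.ofReal (p m z0) := by
      intro m
      rw [← hμuniv m, ← meas_sum_ite (stmtMu p m (p m z0)) univ]
      simp
    simp only [h1]
    rw [← ENNReal.ofReal_sum_of_nonneg (fun m _ => hpos m z0), hsum z0, ENNReal.ofReal_one]
  refine ⟨PMF.ofFintype f hf, ?_, ?_⟩
  · -- support
    intro d hd z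
    rw [PMF.mem_support_iff, PMF.ofFintype_apply] at hd
    obtain ⟨m, -, hm⟩ := Finset.exists_ne_zero_of_sum_ne_zero hd
    rw [stmtMu_apply] at hm
    obtain ⟨u, hu1, -⟩ := nonempty_of_measure_ne_zero hm
    have hdu : stmtD p m u = d := hu1
    have hbase : d ⟨⟨0, by omega⟩, Or.inl rfl⟩ = m := by
      rw [← hdu]; rfl
    rw [hbase]
    by_cases hz : (z : ℕ) = 0
    · right; rw [← hdu]; simp [stmtD, hz]
    · by_cases hu' : u < p m z
      · right; rw [← hdu]; simp [stmtD, hz, hu']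
      · left; rw [← hdu]; simp [stmtD, hz, hu']
  · -- marginals
    intro j z
    have hq : (PMF.ofFintype f hf).toOuterMeasure {d : Zcal J J₀ → Fin J | d z = j}
        = ∑ m, stmtMu p m (p m z0) {d : Zcal J J₀ → Fin J | d z = j} := by
      rw [PMF.toOuterMeasure_apply, tsum_fintype]
      have h1 : ∀ d : Zcal J J₀ → Fin J,
          ({d : Zcal J J₀ → Fin J | d z = j}).indicator (⇑(PMF.ofFintype f hf)) d
          = ∑ m, (if d ∈ {d : Zcal J J₀ → Fin J | d z = j}
              then stmtMu p m (p m z0) {d} else 0) := by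
        intro d
        rw [Set.indicator_apply]
        split_ifs with h
        · rw [PMF.ofFintype_apply]
        · simp
      simp only [h1]
      rw [Finset.sum_comm]
      exact Finset.sum_congr rfl fun m _ => meas_sum_ite _ _
    rw [hq]
    by_cases hz : (z : ℕ) = 0
    · -- z = z0
      have hzz0 : z = z0 := Subtype.ext (Fin.ext hz)
      have hterm : ∀ m : Fin J, stmtMu p m (p m z0) {d : Zcal J J₀ → Fin J | d z = j}
          = if m = j then ENNReal.ofReal (p j z0) else 0 := by
        intro m
        rw [stmtMu_apply]
        by_cases hm : m = j
        · have hA : (stmtD p m)⁻¹' {d : Zcal J J₀ → Fin J | d z = j} = univ := by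
            ext u; simp [stmtD, hz, hm]
          rw [hA, univ_inter, Real.volume_Ico]
          simp [hm]
        · have hA : (stmtD p m)⁻¹' {d : Zcal J J₀ → Fin J | d z = j} = ∅ := by
            ext u; simp [stmtD, hz, hm]
          rw [hA, empty_inter]
          simp [hm]
      simp only [hterm]
      rw [Finset.sum_ite_eq' Finset.univ j]
      rw [hzz0]
      simp
    · by_cases hzj : (z : Fin J) = j
      · -- j equals z
        have hterm : ∀ m : Fin J, stmtMu p m (p m z0) {d : Zcal J J₀ → Fin J | d z = j}
            = ENNReal.ofReal (if m = j then p j z0 else p m z0 - p m z) := by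
          intro m
          rw [stmtMu_apply]
          by_cases hm : m = j
          · have hA : (stmtD p m)⁻¹' {d : Zcal J J₀ → Fin J | d z = j} = univ := by
              ext u
              simp only [mem_preimage, mem_setOf_eq, stmtD, if_neg hz, mem_univ, iff_true]
              split_ifs with h
              · exact hm
              · exact hzj
            rw [hA, univ_inter, Real.volume_Ico]
            simp [hm]
          · have hA : (stmtD p m)⁻¹' {d : Zcal J J₀ → Fin J | d z = j} ∩ Ico 0 (p m z0)
                = Ico (p m z) (p m z0) := by
              ext u
              simp only [mem_inter_iff, mem_preimage, mem_setOf_eq, stmtD, if_neg hz, mem_Ico]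
              constructor
              · rintro ⟨h1, h2, h3⟩
                refine ⟨?_, h3⟩
                by_contra hcon
                push_neg at hcon
                rw [if_pos hcon] at h1
                exact hm h1
              · rintro ⟨h1, h2⟩
                refine ⟨?_, le_trans (hpos m z) h1, h2⟩
                rw [if_neg (not_lt.2 h1)]
                exact hzj
            rw [hA, Real.volume_Ico]
            simp [hm]
        simp only [hterm]
        rw [← ENNReal.ofReal_sum_of_nonneg]
        · congr 1
          have h1 : ∀ m : Fin J, (if m = j then p j z0 else p m z0 - p m z)
              = (p m z0 - p m z) + (if m = j then p j z else 0) := by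
            intro m
            by_cases hm : m = j
            · rw [if_pos hm, if_pos hm, hm]; ring
            · simp [hm]
          simp only [h1]
          rw [Finset.sum_add_distrib, Finset.sum_sub_distrib, hsum z0, hsum z,
            Finset.sum_ite_eq' Finset.univ j]
          simp
        · intro m _
          by_cases hm : m = j
          · simp only [if_pos hm]; exact hpos j z0
          · simp only [if_neg hm]
            have := hmono m z (by rw [hzj]; exact Ne.symm hm)
            linarith
      · -- j differs from z and z ≠ 0
        have hterm : ∀ m : Fin J, stmtMu p m (p m z0) {d : Zcal J J₀ → Fin J | d z = j}
            = if m = j then ENNReal.ofReal (p j z) else 0 := by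
          intro m
          rw [stmtMu_apply]
          by_cases hm : m = j
          · have hle : p m z ≤ p m z0 := hmono m z (fun h => hzj (hm ▸ h))
            have hA : (stmtD p m)⁻¹' {d : Zcal J J₀ → Fin J | d z = j} ∩ Ico 0 (p m z0)
                = Ico 0 (p m z) := by
              ext u
              simp only [mem_inter_iff, mem_preimage, mem_setOf_eq, stmtD, if_neg hz, mem_Ico]
              constructor
              · rintro ⟨h1, h2, h3⟩
                refine ⟨h2, ?_⟩
                by_contra hcon
                rw [if_neg hcon] at h1
                exact hzj h1
              · rintro ⟨h1, h2⟩
                exact ⟨by rw [if_pos h2, hm], h1, lt_of_lt_of_le h2 hle⟩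
            rw [hA, Real.volume_Ico]
            simp [hm]
          · have hA : (stmtD p m)⁻¹' {d : Zcal J J₀ → Fin J | d z = j} = ∅ := by
              ext u
              simp only [mem_preimage, mem_setOf_eq, stmtD, if_neg hz,
                mem_empty_iff_false, iff_false]
              split_ifs with h
              · exact hm
              · exact hzj
            rw [hA, empty_inter]
            simp [hm]
        simp only [hterm]
        rw [Finset.sum_ite_eq' Finset.univ j]
        simp
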